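/- arXiv:2510.08758 — 3 statements merged into one kernel-verified Lean document; each statement's English description precedes it below -/
import Mathlib

section
/- If the latent non-treatment features are independent of the document label, i.e. Z(1) and Z(0) are equal in distribution (and the potential outcomes Y(1,·), Y(0,·) are integrable), then the drift term E[Y(1, Z(1)) − Y(1, Z(0))] equals 0, and consequently the document-level effect equals the treatment-only effect: τ_d = E[Y(1, Z(1)) − Y(0, Z(0))] = E[Y(1, Z(0)) − Y(0, Z(0))] = τ_t. -/
open MeasureTheory ProbabilityTheory

theorem ProbabilityTheory.IdentDistrib.integral_sub_eq_zero {α E : Type*} [MeasurableSpace α]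
    [NormedAddCommGroup E] [NormedSpace ℝ E] [MeasurableSpace E] [BorelSpace E]
    {μ : Measure α} {f g : α → E} (h : IdentDistrib f g μ μ) (hf : Integrable f μ) :
    ∫ x, (f x - g x) ∂μ = 0 := by
  rw [integral_sub hf (h.integrable_snd hf), h.integral_eq, sub_self]

theorem drift_vanishes_of_equal_in_distribution_general
    {Ω ζ : Type*} [MeasurableSpace Ω] [MeasurableSpace ζ]
    (μ : Measure Ω)
    (Z : Bool → Ω → ζ) (hZ : ∀ d, Measurable (Z d))
    (Y : Bool → ζ → ℝ) (hY : ∀ t, Measurable (Y t))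
    (hint : ∀ t d : Bool, Integrable (fun ω => Y t (Z d ω)) μ)
    (hdist : μ.map (Z true) = μ.map (Z false)) :
    (∫ ω, (Y true (Z true ω) - Y true (Z false ω)) ∂μ = 0)
    ∧ ∫ ω, (Y true (Z true ω) - Y false (Z false ω)) ∂μ
        = ∫ ω, (Y true (Z false ω) - Y false (Z false ω)) ∂μ := by
  have hZ_law : IdentDistrib (Z true) (Z false) μ μ :=
    ⟨(hZ true).aemeasurable, (hZ false).aemeasurable, hdist⟩
  have hY_law : IdentDistrib (fun ω => Y true (Z true ω)) (fun ω => Y true (Z false ω)) μ μ :=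
    hZ_law.comp (hY true)
  refine ⟨hY_law.integral_sub_eq_zero (hint true true), ?_⟩
  rw [integral_sub (hint true true) (hint false false),
    integral_sub (hint true false) (hint false false), hY_law.integral_eq]

/-- If the latent non-treatment features are independent of the document label,
i.e. `Z(1)` and `Z(0)` are equal in distribution, then the drift term
`E[Y(1,Z(1)) − Y(1,Z(0))]` is `0`, and consequently the document-level effect
`τ_d = E[Y(1,Z(1)) − Y(0,Z(0))]` equals the treatment-only effect
`τ_t = E[Y(1,Z(0)) − Y(0,Z(0))]`. -/
theorem drift_vanishes_of_equal_in_distribution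
    {Ω ζ : Type*} [MeasurableSpace Ω] [MeasurableSpace ζ]
    (μ : Measure Ω) [IsProbabilityMeasure μ]
    (Z : Bool → Ω → ζ) (hZ : ∀ d, Measurable (Z d))
    (Y : Bool → ζ → ℝ) (hY : ∀ t, Measurable (Y t))
    (hint : ∀ t d : Bool, Integrable (fun ω => Y t (Z d ω)) μ)
    (hdist : μ.map (Z true) = μ.map (Z false)) :
    (∫ ω, (Y true (Z true ω) - Y true (Z false ω)) ∂μ = 0)
    ∧ ∫ ω, (Y true (Z true ω) - Y false (Z false ω)) ∂μ
        = ∫ ω, (Y true (Z false ω) - Y false (Z false ω)) ∂μ :=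
  drift_vanishes_of_equal_in_distribution_general μ Z hZ Y hY hint hdist
end

section
/- Unbiasedness of the paired edit estimator (Proposition 1): Suppose there are N original texts indexed i = 1,…,N, each with J_i ≥ 2 versions W_{i1},…,W_{iJ_i}, where version j = 1 is the original and each edited version j > 1 satisfies T(W_{ij}) = 1 − T(W_{i1}) and Z(W_{ij}) = Z(W_{i1}) =: z_i (edits flip the latent treatment and preserve all other latent features). Suppose texts are randomly assigned to evaluators, so that for every version ij the observed outcome Y_{ij} satisfies E[Y_{ij} | T(W_{ij}) = t, Z(W_{ij}) = z_i] = E[Y(t, z_i)] (unconfoundedness by randomization) and Y(t,z) is integrable. Then the estimator τ̂_t := (1/N) Σ_{i=1}^{N} [ (Σ_j Y_{ij} T_{ij}) / (Σ_j T_{ij}) − (Σ_j Y_{ij} (1 − T_{ij})) / (Σ_j (1 − T_{ij})) ], with T_{ij} := T(W_{ij}), satisfies E[τ̂_t] = τ_t, where τ_t := E_Z[Y(1, Z) − Y(0, Z)] and Z is distributed as the empirical distribution of the latent features z_1,…,z_N of the original texts. -/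
open MeasureTheory Finset

/-!
Within each text, the treated and the control versions are averages of observed outcomes whose
expectations, by unconfoundedness, are all `E[Y(1, zᵢ)]` resp. `E[Y(0, zᵢ)]`. Since every edit
flips the treatment, both groups are nonempty, so the normalising sums are nonzero and each
group mean is unbiased for its potential-outcome mean; linearity of the integral finishes.
-/

section BinaryWeights

variable {ι : Type*} {w : ι → ℝ}

lemma binary_one_sub (hw : ∀ j, w j = 0 ∨ w j = 1) (j : ι) : 1 - w j = 0 ∨ 1 - w j = 1 := by
  rcases hw j with h | h <;> simp [h]

lemma sum_binary_pos [Fintype ι] (hw : ∀ j, w j = 0 ∨ w j = 1) (h₁ : ∃ j, w j = 1) :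
    0 < ∑ j, w j := by
  obtain ⟨j, hj⟩ := h₁
  refine sum_pos' (fun j _ => ?_) ⟨j, mem_univ j, by simp [hj]⟩
  rcases hw j with h | h <;> simp [h]

lemma exists_eq_one_and_exists_eq_zero_of_flip (hw : ∀ j, w j = 0 ∨ w j = 1) {j₀ j₁ : ι}
    (hflip : w j₁ = 1 - w j₀) : (∃ j, w j = 1) ∧ ∃ j, w j = 0 := by
  rcases hw j₀ with h | h
  · exact ⟨⟨j₁, by simp [hflip, h]⟩, ⟨j₀, h⟩⟩
  · exact ⟨⟨j₀, h⟩, ⟨j₁, by simp [hflip, h]⟩⟩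

end BinaryWeights

section WeightedMean

variable {Ω ι : Type*} [MeasurableSpace Ω] {μ : Measure Ω} [Fintype ι]

lemma integrable_weighted_mean {X : ι → Ω → ℝ} (hX : ∀ j, Integrable (X j) μ) (w : ι → ℝ)
    (c : ℝ) : Integrable (fun ω => (∑ j, X j ω * w j) / c) μ :=
  (integrable_finsetSum _ fun j _ => (hX j).mul_const (w j)).div_const c

lemma integral_weighted_mean_of_binary {X : ι → Ω → ℝ} (hX : ∀ j, Integrable (X j) μ)
    {w : ι → ℝ} (hw : ∀ j, w j = 0 ∨ w j = 1) (h₁ : ∃ j, w j = 1) {m : ℝ}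
    (hm : ∀ j, w j = 1 → ∫ ω, X j ω ∂μ = m) :
    ∫ ω, (∑ j, X j ω * w j) / ∑ j, w j ∂μ = m := by
  have hterm : ∀ j, (∫ ω, X j ω ∂μ) * w j = m * w j := by
    intro j
    rcases hw j with h | h
    · simp [h]
    · rw [hm j h]
  have hsum : ∑ j, w j ≠ 0 := (sum_binary_pos hw h₁).ne'
  calc ∫ ω, (∑ j, X j ω * w j) / ∑ j, w j ∂μ
      = (∑ j, (∫ ω, X j ω ∂μ) * w j) / ∑ j, w j := by
        rw [integral_div, integral_finsetSum _ fun j _ => (hX j).mul_const (w j)]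
        simp only [integral_mul_const]
    _ = m := by simp only [hterm, ← mul_sum, mul_div_cancel_right₀ _ hsum]

lemma integral_difference_in_means {X : ι → Ω → ℝ} (hX : ∀ j, Integrable (X j) μ)
    {t : ι → ℝ} (ht : ∀ j, t j = 0 ∨ t j = 1) (h₁ : ∃ j, t j = 1) (h₀ : ∃ j, t j = 0)
    {m₁ m₀ : ℝ} (hm₁ : ∀ j, t j = 1 → ∫ ω, X j ω ∂μ = m₁)
    (hm₀ : ∀ j, t j = 0 → ∫ ω, X j ω ∂μ = m₀) :
    ∫ ω, ((∑ j, X j ω * t j) / ∑ j, t j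
        - (∑ j, X j ω * (1 - t j)) / ∑ j, (1 - t j)) ∂μ = m₁ - m₀ := by
  rw [integral_sub (integrable_weighted_mean hX _ _) (integrable_weighted_mean hX _ _),
    integral_weighted_mean_of_binary hX ht h₁ hm₁,
    integral_weighted_mean_of_binary hX (binary_one_sub ht) (h₀.imp fun j h => by simp [h])
      fun j h => hm₀ j (by linarith)]

end WeightedMean

/-- Unbiasedness of the paired edit estimator (Proposition 1).
There are `N` original texts, text `i` having `J i ≥ 2` versions; version `0`
is the original and every edit `j ≠ 0` flips the binary latent treatment
(`T i j = 1 - T i 0`) while preserving the latent non-treatment features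
`z i`.  `Ypot t z` is the (random, integrable) potential outcome of a reader
exposed to a text with latent treatment `t` and latent features `z`; by the
random assignment of texts to evaluators, the observed outcome `Yobs i j` of
version `j` of text `i` satisfies
`E[Yobs i j] = E[Ypot (T i j) (z i)]` (unconfoundedness).  Then the expectation
of the paired edit estimator `τ̂_t` equals
`τ_t = (1/N) ∑ i, E[Ypot 1 (z i) − Ypot 0 (z i)]`, the average treatment-only
effect over the empirical distribution of the latent features of the original
texts. -/
theorem paired_edit_estimator_unbiased
    {Ω : Type*} [MeasurableSpace Ω] (μ : Measure Ω)
    {ζ : Type*}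
    (N : ℕ)
    (J : Fin N → ℕ) (hJ : ∀ i, 2 ≤ J i)
    (T : (i : Fin N) → Fin (J i) → ℝ)
    (hT01 : ∀ i j, T i j = 0 ∨ T i j = 1)
    (hflip : ∀ i (j : Fin (J i)), j ≠ ⟨0, by have := hJ i; omega⟩ →
      T i j = 1 - T i ⟨0, by have := hJ i; omega⟩)
    (z : Fin N → ζ)
    (Ypot : ℝ → ζ → Ω → ℝ)
    (hYpotInt : ∀ t zval, Integrable (Ypot t zval) μ)
    (Yobs : (i : Fin N) → Fin (J i) → Ω → ℝ)
    (hYobsInt : ∀ i j, Integrable (Yobs i j) μ)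
    (hunconf : ∀ i j, ∫ ω, Yobs i j ω ∂μ = ∫ ω, Ypot (T i j) (z i) ω ∂μ) :
    ∫ ω, ((N : ℝ)⁻¹ * ∑ i, ((∑ j, Yobs i j ω * T i j) / (∑ j, T i j)
        - (∑ j, Yobs i j ω * (1 - T i j)) / (∑ j, (1 - T i j)))) ∂μ
      = (N : ℝ)⁻¹ * ∑ i, ∫ ω, (Ypot 1 (z i) ω - Ypot 0 (z i) ω) ∂μ := by
  have htext : ∀ i, Integrable (fun ω => (∑ j, Yobs i j ω * T i j) / (∑ j, T i j)
      - (∑ j, Yobs i j ω * (1 - T i j)) / (∑ j, (1 - T i j))) μ := fun i =>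
    (integrable_weighted_mean (hYobsInt i) _ _).sub (integrable_weighted_mean (hYobsInt i) _ _)
  rw [integral_const_mul, integral_finsetSum _ fun i _ => htext i]
  congr 1
  refine sum_congr rfl fun i _ => ?_
  have hJi := hJ i
  obtain ⟨h₁, h₀⟩ := exists_eq_one_and_exists_eq_zero_of_flip (hT01 i)
    (hflip i ⟨1, by omega⟩ (by simp [Fin.ext_iff]))
  rw [integral_sub (hYpotInt 1 (z i)) (hYpotInt 0 (z i))]
  exact integral_difference_in_means (hYobsInt i) (hT01 i) h₁ h₀
    (fun j h => by rw [hunconf, h]) (fun j h => by rw [hunconf, h])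
end

section
/- Weighted least squares representation of the paired edit estimator: For data {(Y_{ij}, T_{ij}) : i = 1,…,N, j = 1,…,J_i} with T_{ij} ∈ {0,1} and, for each i, at least one version with T_{ij} = 1 and at least one with T_{ij} = 0, consider the weighted least squares regression of Y_{ij} on a treatment indicator T_{ij} and a fixed effect (intercept) for each original text i, with weight w_{ij} = ( Σ_{j'=1}^{J_i} 1{T_{ij'} = T_{ij}} )^{-1} for observation (i,j), i.e. coefficients minimizing Σ_{i,j} w_{ij} ( Y_{ij} − α_i − β T_{ij} )². Then the minimizing treatment coefficient β equals N·τ̂_t / N = τ̂_t, the paired edit estimator τ̂_t := (1/N) Σ_{i=1}^{N} [ (Σ_j Y_{ij} T_{ij}) / (Σ_j T_{ij}) − (Σ_j Y_{ij} (1 − T_{ij})) / (Σ_j (1 − T_{ij})) ]. -/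
/-!
Within text `i` the weights are `1/n₁` on treated and `1/n₀` on control versions, so the text's
contribution to the objective is, up to a constant, `(αᵢ + β - aᵢ)² + (αᵢ - bᵢ)²`, where `aᵢ`, `bᵢ`
are the treated and control means. Minimizing over `αᵢ` leaves `(aᵢ - bᵢ - β)² / 2`, and the sum of
these is minimized exactly at the mean of the differences `aᵢ - bᵢ`, which is `τ̂_t`.
-/

open Finset
open scoped Classical

section

variable {ι : Type*} [Fintype ι]

noncomputable def weightedMean (p Y : ι → ℝ) : ℝ := (∑ j, Y j * p j) / ∑ j, p j

lemma sum_mul_sq_sub_eq (p Y : ι → ℝ) (hp : ∑ j, p j ≠ 0) (u : ℝ) :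
    ∑ j, p j * (Y j - u) ^ 2
      = (∑ j, p j) * (u - weightedMean p Y) ^ 2 + ∑ j, p j * (Y j - weightedMean p Y) ^ 2 := by
  have expand : ∀ v : ℝ, ∑ j, p j * (Y j - v) ^ 2
      = ∑ j, p j * Y j ^ 2 - 2 * v * ∑ j, Y j * p j + v ^ 2 * ∑ j, p j := by
    intro v
    simp only [mul_sum, ← sum_sub_distrib, ← sum_add_distrib]
    exact sum_congr rfl fun j _ => by ring
  have hmean : ∑ j, Y j * p j = weightedMean p Y * ∑ j, p j := (div_mul_cancel₀ _ hp).symm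
  rw [expand, expand, hmean]
  ring

lemma sum_pos_of_binary {T : ι → ℝ} (hT : ∀ j, T j = 0 ∨ T j = 1) (h1 : ∃ j, T j = 1) :
    0 < ∑ j, T j := by
  obtain ⟨j₁, hj₁⟩ := h1
  refine sum_pos' (fun j _ => ?_) ⟨j₁, mem_univ _, by simp [hj₁]⟩
  rcases hT j with h | h <;> simp [h]

lemma exists_sum_balanced_weight_mul_sq_eq (T Y w : ι → ℝ) (hT : ∀ j, T j = 0 ∨ T j = 1)
    (h1 : ∃ j, T j = 1) (h0 : ∃ j, T j = 0)
    (hw : ∀ j, w j = (∑ j', if T j' = T j then (1 : ℝ) else 0)⁻¹) :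
    ∃ R, ∀ c γ : ℝ, ∑ j, w j * (Y j - c - γ * T j) ^ 2
      = (c + γ - weightedMean T Y) ^ 2 + (c - weightedMean (1 - T) Y) ^ 2 + R := by
  have hS : ∑ j, T j ≠ 0 := (sum_pos_of_binary hT h1).ne'
  have hS' : ∑ j, (1 - T) j ≠ 0 := by
    refine (sum_pos_of_binary (fun j => ?_) ?_).ne'
    · rcases hT j with h | h <;> simp [h]
    · obtain ⟨j₀, hj₀⟩ := h0
      exact ⟨j₀, by simp [hj₀]⟩
  have count_one : (∑ j', if T j' = 1 then (1 : ℝ) else 0) = ∑ j', T j' :=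
    sum_congr rfl fun j' _ => by rcases hT j' with h | h <;> simp [h]
  have count_zero : (∑ j', if T j' = 0 then (1 : ℝ) else 0) = ∑ j', (1 - T) j' :=
    sum_congr rfl fun j' _ => by rcases hT j' with h | h <;> simp [h]
  have split : ∀ c γ j, w j * (Y j - c - γ * T j) ^ 2
      = (∑ j', T j')⁻¹ * (T j * (Y j - (c + γ)) ^ 2)
        + (∑ j', (1 - T) j')⁻¹ * ((1 - T) j * (Y j - c) ^ 2) := by
    intro c γ j
    rcases hT j with h | h
    · rw [hw, h, count_zero]; simp [h]
    · rw [hw, h, count_one]; simp [h, sub_sub]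
  refine ⟨(∑ j, T j)⁻¹ * ∑ j, T j * (Y j - weightedMean T Y) ^ 2
      + (∑ j, (1 - T) j)⁻¹ * ∑ j, (1 - T) j * (Y j - weightedMean (1 - T) Y) ^ 2,
    fun c γ => ?_⟩
  rw [sum_congr rfl fun j _ => split c γ j, sum_add_distrib, ← mul_sum, ← mul_sum,
    sum_mul_sq_sub_eq T Y hS, sum_mul_sq_sub_eq (1 - T) Y hS']
  field_simp
  ring

lemma eq_mean_sub_of_forall_paired_sq_sum_le [Nonempty ι] (a b α : ι → ℝ) (β : ℝ)
    (hmin : ∀ (α' : ι → ℝ) (β' : ℝ), ∑ i, ((α i + β - a i) ^ 2 + (α i - b i) ^ 2)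
      ≤ ∑ i, ((α' i + β' - a i) ^ 2 + (α' i - b i) ^ 2)) :
    β = (Fintype.card ι : ℝ)⁻¹ * ∑ i, (a i - b i) := by
  set τ := (Fintype.card ι : ℝ)⁻¹ * ∑ i, (a i - b i)
  have lower : ∑ i, (a i - b i - β) ^ 2 / 2 ≤ ∑ i, ((α i + β - a i) ^ 2 + (α i - b i) ^ 2) :=
    sum_le_sum fun i _ => by nlinarith [sq_nonneg (α i + β - a i + (α i - b i))]
  have at_τ : ∑ i, (((a i + b i - τ) / 2 + τ - a i) ^ 2 + ((a i + b i - τ) / 2 - b i) ^ 2)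
      = ∑ i, (a i - b i - τ) ^ 2 / 2 :=
    sum_congr rfl fun i _ => by ring
  have hmean : weightedMean (fun _ => 1) (a - b) = τ := by
    simp [weightedMean, τ, div_eq_inv_mul]
  have decomp := sum_mul_sq_sub_eq (fun _ => 1) (a - b) (by simp) β
  simp only [hmean, one_mul, sum_const, card_univ, nsmul_eq_mul, mul_one, Pi.sub_apply] at decomp
  have hcard : (0 : ℝ) < Fintype.card ι := by exact_mod_cast Fintype.card_pos
  have hgap : (Fintype.card ι : ℝ) * (β - τ) ^ 2 ≤ 0 := by
    have compare := hmin (fun i => (a i + b i - τ) / 2) τ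
    rw [at_τ] at compare
    simp only [← sum_div] at lower compare
    linarith
  have hβτ := pow_eq_zero_iff two_ne_zero |>.mp
    (le_antisymm (nonpos_of_mul_nonpos_right hgap hcard) (sq_nonneg _))
  linarith

end

/-- Weighted least squares representation of the paired edit estimator.
For each original text `i` with versions `j : Fin (J i)`, outcomes `Y i j`,
binary treatment indicators `T i j ∈ {0,1}` with both groups nonempty, and
weights `w i j = (∑ j', 1{T i j' = T i j})⁻¹`, any minimizer `(α, β)` of the
weighted least squares objective
`∑ i ∑ j, w i j * (Y i j − α i − β * T i j)²`
(over the per-text fixed effects `α` and the common treatment coefficient `β`)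
has treatment coefficient `β` equal to the paired edit estimator `τ̂_t`. -/
theorem wls_representation_of_paired_edit_estimator
    (N : ℕ) (hN : 0 < N)
    (J : Fin N → ℕ)
    (Y : (i : Fin N) → Fin (J i) → ℝ)
    (T : (i : Fin N) → Fin (J i) → ℝ)
    (hT01 : ∀ i j, T i j = 0 ∨ T i j = 1)
    (hboth : ∀ i, (∃ j, T i j = 1) ∧ (∃ j, T i j = 0))
    (w : (i : Fin N) → Fin (J i) → ℝ)
    (hw : ∀ i j, w i j = (∑ j', if T i j' = T i j then (1 : ℝ) else 0)⁻¹)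
    (α : Fin N → ℝ) (β : ℝ)
    (hmin : ∀ (α' : Fin N → ℝ) (β' : ℝ),
      ∑ i, ∑ j, w i j * (Y i j - α i - β * T i j) ^ 2
        ≤ ∑ i, ∑ j, w i j * (Y i j - α' i - β' * T i j) ^ 2) :
    β = (N : ℝ)⁻¹ * ∑ i, ((∑ j, Y i j * T i j) / (∑ j, T i j)
        - (∑ j, Y i j * (1 - T i j)) / (∑ j, (1 - T i j))) := by
  choose R hR using fun i => exists_sum_balanced_weight_mul_sq_eq (T i) (Y i) (w i) (hT01 i)
    (hboth i).1 (hboth i).2 (hw i)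
  have objective : ∀ (α' : Fin N → ℝ) (β' : ℝ), ∑ i, ∑ j, w i j * (Y i j - α' i - β' * T i j) ^ 2
      = ∑ i, ((α' i + β' - weightedMean (T i) (Y i)) ^ 2
          + (α' i - weightedMean (1 - T i) (Y i)) ^ 2) + ∑ i, R i := by
    intro α' β'
    rw [← sum_add_distrib]
    exact sum_congr rfl fun i _ => hR i (α' i) β'
  have := Fin.pos_iff_nonempty.mp hN
  have hβ := eq_mean_sub_of_forall_paired_sq_sum_le _ _ α β fun α' β' => by
    simpa only [objective, add_le_add_iff_right] using hmin α' β'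
  rwa [Fintype.card_fin] at hβ
end
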